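/- For every natural number L, define B(L) = Σ_j (-1)^j q^(2j²-2j) [2L choose L-2j]_q. Then B(L) = q^L ∏_{k=0}^{L-1} (1 + q^(2k-1)); in particular B(L), viewed as a Laurent polynomial, has nonnegative coefficients. -/

import Mathlib

/-!
Put `G_L(r, c) = ∑ⱼ (-1)^j q^(2j² + cj) [2L, L + r - 2j]` (`altGaussSum L r c`), so that
`B(L) = G_L(0, -2)`. Applying the `q`-Pascal rule twice to `[2L + 2, k]` expresses
`G_{L+1}(r, c)` through `G_L(r - 1, c + 2)`, `G_L(r, c)` and `G_L(r + 1, c - 2)`; the shift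
`j ↦ j + 1` and the symmetry `[n, k] = [n, n - k]` bring these back to `B(L)` and
`D(L) = G_L(1, 0)`, so the pair `(B, D)` obeys a linear recurrence. With
`P(L) = ∏_{k<L} (1 + q^(2k-1))`, induction then gives `B(L) = q^L P(L)` together with
`(1 + q⁻¹) D(L) = (1 - q^(2L)) P(L)`. The coefficients are nonnegative because `P(L)` comes
from a Laurent polynomial over `ℕ`.
-/

open LaurentPolynomial Finset

noncomputable section

/-- Gaussian binomial coefficient with natural indices, in base `x`, defined by the
`q`-Pascal recurrence `[n+1, k+1] = [n, k] + x^(k+1) * [n, k+1]`.  It vanishes for `k > n`. -/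
def gaussAux (x : LaurentPolynomial ℤ) : ℕ → ℕ → LaurentPolynomial ℤ
  | _, 0 => 1
  | 0, _ + 1 => 0
  | n + 1, k + 1 => gaussAux x n k + x ^ (k + 1) * gaussAux x n (k + 1)

/-- The Gaussian binomial coefficient `[n choose k]` in base `x`, for integer indices:
it is zero when `n < 0` or `k < 0` (and, by `gaussAux`, also when `k > n`). -/
def qbin (x : LaurentPolynomial ℤ) (n k : ℤ) : LaurentPolynomial ℤ :=
  if 0 ≤ n ∧ 0 ≤ k then gaussAux x n.toNat k.toNat else 0

/-- `(-1)^j` for an integer `j`, as a Laurent polynomial. -/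
def m1 (j : ℤ) : LaurentPolynomial ℤ := ((((-1 : ℤˣ) ^ j : ℤˣ) : ℤ) : LaurentPolynomial ℤ)

lemma gaussAux_of_lt (x : LaurentPolynomial ℤ) : ∀ {n k : ℕ}, n < k → gaussAux x n k = 0
  | 0, _ + 1, _ => rfl
  | n + 1, k + 1, h => by
      rw [gaussAux, gaussAux_of_lt x (by omega), gaussAux_of_lt x (by omega), mul_zero, add_zero]

lemma qbin_natCast (x : LaurentPolynomial ℤ) (n k : ℕ) : qbin x n k = gaussAux x n k := by
  simp [qbin]

lemma qbin_of_neg (x : LaurentPolynomial ℤ) {n k : ℤ} (hk : k < 0) : qbin x n k = 0 := by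
  rw [qbin, if_neg (by omega)]

lemma qbin_of_lt (x : LaurentPolynomial ℤ) {n k : ℤ} (h : n < k) : qbin x n k = 0 := by
  unfold qbin
  split_ifs with hnk
  · exact gaussAux_of_lt x (by omega)
  · rfl

lemma qbin_zero_left (x : LaurentPolynomial ℤ) (k : ℤ) :
    qbin x 0 k = if k = 0 then 1 else 0 := by
  rcases lt_trichotomy k 0 with hk | rfl | hk
  · rw [qbin_of_neg x hk, if_neg hk.ne]
  · simp [qbin, gaussAux]
  · rw [qbin_of_lt x hk, if_neg hk.ne']

lemma qbin_succ_left {n : ℤ} (hn : 0 ≤ n) (k : ℤ) :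
    qbin (T 1) (n + 1) k = qbin (T 1) n (k - 1) + T k * qbin (T 1) n k := by
  lift n to ℕ using hn
  rcases lt_or_ge k 0 with hk | hk
  · simp [qbin_of_neg _ hk, qbin_of_neg _ (by omega : k - 1 < 0)]
  lift k to ℕ using hk
  cases k with
  | zero => simp [qbin, gaussAux, (by omega : 0 ≤ (n : ℤ) + 1)]
  | succ k =>
    push_cast
    rw [add_sub_cancel_right, ← Nat.cast_succ, ← Nat.cast_succ, qbin_natCast, qbin_natCast,
      qbin_natCast, gaussAux, T_pow, mul_one]

lemma qbin_succ_left' {n : ℤ} (hn : 0 ≤ n) (k : ℤ) :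
    qbin (T 1) (n + 1) k = T (n + 1 - k) * qbin (T 1) n (k - 1) + qbin (T 1) n k := by
  induction n, hn using Int.leInduction generalizing k with
  | base =>
    rw [qbin_succ_left le_rfl]
    simp only [qbin_zero_left, sub_eq_zero]
    split_ifs <;> subst_vars <;> simp_all
  | succ n hn ih =>
    conv_lhs => rw [qbin_succ_left (by omega), ih, ih]
    rw [qbin_succ_left hn (k - 1), qbin_succ_left hn k]
    linear_combination (norm := ring_nf) qbin (T 1) n (k - 1) *
      (T_add (R := ℤ) (n + 1 + 1 - k) (k - 1) - T_add (R := ℤ) k (n + 1 - k))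

lemma qbin_symm (n k : ℤ) : qbin (T 1) n k = qbin (T 1) n (n - k) := by
  rcases lt_or_ge n 0 with hn | hn
  · simp [qbin, hn.not_ge]
  induction n, hn using Int.leInduction generalizing k with
  | base => simp [qbin_zero_left, neg_eq_zero]
  | succ n hn ih =>
    rw [qbin_succ_left hn, qbin_succ_left' hn, ih, ih k]
    ring_nf

lemma qbin_add_two_left {n : ℤ} (hn : 0 ≤ n) (k : ℤ) :
    qbin (T 1) (n + 2) k = T (n + 2 - k) * qbin (T 1) n (k - 2)
      + (1 + T (n + 1)) * qbin (T 1) n (k - 1) + T k * qbin (T 1) n k := by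
  rw [show n + 2 = n + 1 + 1 by ring, qbin_succ_left (by omega), qbin_succ_left' hn,
    qbin_succ_left' hn]
  linear_combination (norm := ring_nf) qbin (T 1) n (k - 1) * (T_add (R := ℤ) k (n + 1 - k)).symm

lemma m1_add_one (j : ℤ) : m1 (j + 1) = -m1 j := by
  simp [m1, zpow_add_one]

lemma m1_neg (j : ℤ) : m1 (-j) = m1 j := by
  simp [m1, zpow_neg, Int.units_inv_eq_self]

def altGaussTerm (L : ℕ) (r c j : ℤ) : LaurentPolynomial ℤ :=
  m1 j * T (2 * j ^ 2 + c * j) * qbin (T 1) (2 * L) (L + r - 2 * j)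

def altGaussSum (L : ℕ) (r c : ℤ) : LaurentPolynomial ℤ :=
  ∑ᶠ j : ℤ, altGaussTerm L r c j

@[fun_prop]
lemma hasFiniteSupport_altGaussTerm (L : ℕ) (r c : ℤ) :
    (altGaussTerm L r c).HasFiniteSupport := by
  refine (Set.finite_Icc ((r - L) / 2 - 1) ((L + r) / 2 + 1)).subset fun j hj => ?_
  rw [Set.mem_Icc]
  by_contra hj'
  apply hj
  rcases lt_or_ge ((L : ℤ) + r - 2 * j) 0 with h | h
  · rw [altGaussTerm, qbin_of_neg _ h, mul_zero]
  · rw [altGaussTerm, qbin_of_lt _ (by omega), mul_zero]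

lemma altGaussTerm_succ (L : ℕ) (r c j : ℤ) :
    altGaussTerm (L + 1) r c j = T (L + 1 - r) * altGaussTerm L (r - 1) (c + 2) j
      + (1 + T (2 * L + 1)) * altGaussTerm L r c j
      + T (L + 1 + r) * altGaussTerm L (r + 1) (c - 2) j := by
  have hL : (0 : ℤ) ≤ 2 * L := by positivity
  simp only [altGaussTerm, Nat.cast_succ]
  rw [show 2 * ((L : ℤ) + 1) = 2 * L + 2 by ring, qbin_add_two_left hL,
    show (L : ℤ) + 1 + r - 2 * j - 2 = L + (r - 1) - 2 * j by ring,
    show (L : ℤ) + 1 + r - 2 * j - 1 = L + r - 2 * j by ring,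
    show (L : ℤ) + 1 + r - 2 * j = L + (r + 1) - 2 * j by ring]
  have e₁ : (T (2 * j ^ 2 + c * j) * T (2 * L + 2 - (L + (r + 1) - 2 * j))
      : LaurentPolynomial ℤ) = T (L + 1 - r) * T (2 * j ^ 2 + (c + 2) * j) := by
    rw [← T_add, ← T_add]; ring_nf
  have e₂ : (T (2 * j ^ 2 + c * j) * T (L + (r + 1) - 2 * j) : LaurentPolynomial ℤ)
      = T (L + 1 + r) * T (2 * j ^ 2 + (c - 2) * j) := by rw [← T_add, ← T_add]; ring_nf
  linear_combination m1 j * qbin (T 1) (2 * L) (L + (r - 1) - 2 * j) * e₁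
    + m1 j * qbin (T 1) (2 * L) (L + (r + 1) - 2 * j) * e₂

lemma altGaussSum_succ (L : ℕ) (r c : ℤ) :
    altGaussSum (L + 1) r c = T (L + 1 - r) * altGaussSum L (r - 1) (c + 2)
      + (1 + T (2 * L + 1)) * altGaussSum L r c
      + T (L + 1 + r) * altGaussSum L (r + 1) (c - 2) := by
  simp only [altGaussSum, altGaussTerm_succ, mul_finsum]
  rw [finsum_add_distrib (by fun_prop) (by fun_prop),
    finsum_add_distrib (by fun_prop) (by fun_prop)]

lemma altGaussSum_shift (L : ℕ) (r c : ℤ) :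
    altGaussSum L r c = -T (c + 2) * altGaussSum L (r - 2) (c + 4) := by
  rw [altGaussSum, altGaussSum, mul_finsum, ← finsum_comp_equiv (Equiv.addRight 1)]
  refine finsum_congr fun j => ?_
  have e : (T (2 * (j + 1) ^ 2 + c * (j + 1)) : LaurentPolynomial ℤ)
      = T (c + 2) * T (2 * j ^ 2 + (c + 4) * j) := by rw [← T_add]; ring_nf
  rw [Equiv.coe_addRight, altGaussTerm, altGaussTerm, m1_add_one, e,
    show (L : ℤ) + r - 2 * (j + 1) = L + (r - 2) - 2 * j by ring]
  ring

lemma altGaussSum_neg (L : ℕ) (r c : ℤ) : altGaussSum L r c = altGaussSum L (-r) (-c) := by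
  rw [altGaussSum, altGaussSum, ← finsum_comp_equiv (Equiv.neg ℤ)]
  refine finsum_congr fun j => ?_
  rw [Equiv.neg_apply, altGaussTerm, altGaussTerm, m1_neg, qbin_symm,
    show 2 * (L : ℤ) - (L + r - 2 * -j) = L + -r - 2 * j by ring,
    show 2 * (-j) ^ 2 + c * -j = 2 * j ^ 2 + -c * j by ring]

lemma altGaussTerm_zero (r c j : ℤ) :
    altGaussTerm 0 r c j = if r = 2 * j then m1 j * T (2 * j ^ 2 + c * j) else 0 := by
  simp only [altGaussTerm, Nat.cast_zero, mul_zero, zero_add, qbin_zero_left, sub_eq_zero]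
  split_ifs <;> simp

lemma altGaussSum_zero_zero (c : ℤ) : altGaussSum 0 0 c = 1 := by
  rw [altGaussSum, finsum_eq_single _ 0 fun j hj => by simp [altGaussTerm_zero, hj]]
  simp [altGaussTerm_zero, m1]

lemma altGaussSum_zero_one (c : ℤ) : altGaussSum 0 1 c = 0 :=
  finsum_eq_zero_of_forall_eq_zero fun j => by simp [altGaussTerm_zero]; omega

lemma altGaussSum_succ_zero (L : ℕ) :
    altGaussSum (L + 1) 0 (-2) = (1 + T (2 * L + 1)) * altGaussSum L 0 (-2)
      + (T (L + 1) - T (L - 1)) * altGaussSum L 1 0 := by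
  have h₁ : altGaussSum L (-1) 0 = altGaussSum L 1 0 := by
    simpa using altGaussSum_neg L (-1) 0
  have h₂ : altGaussSum L 1 (-4) = -T (-2) * altGaussSum L 1 0 := by
    rw [altGaussSum_shift, ← h₁]; norm_num
  have e : (T (L + 1) * T (-2) : LaurentPolynomial ℤ) = T (L - 1) := by rw [← T_add]; ring_nf
  rw [altGaussSum_succ]
  norm_num only [sub_zero, add_zero, zero_sub, zero_add, h₁, h₂]
  linear_combination (-altGaussSum L 1 0) * e

lemma altGaussSum_succ_one (L : ℕ) :
    altGaussSum (L + 1) 1 0 = (1 + T (2 * L + 1)) * altGaussSum L 1 0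
      + (T L - T (L + 2)) * altGaussSum L 0 (-2) := by
  have h₁ : altGaussSum L 0 2 = altGaussSum L 0 (-2) := by
    simpa using altGaussSum_neg L 0 2
  have h₂ : altGaussSum L 2 (-2) = -altGaussSum L 0 (-2) := by
    rw [altGaussSum_shift, ← h₁]; norm_num
  rw [altGaussSum_succ]
  norm_num only [sub_zero, add_zero, zero_sub, zero_add, h₁, h₂]
  ring_nf

lemma one_add_T_ne_zero (n : ℤ) : (1 + T n : LaurentPolynomial ℤ) ≠ 0 := by
  intro h
  have := congrArg (fun p : LaurentPolynomial ℤ => p.coeff n) h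
  simp [← T_zero] at this
  split_ifs at this <;> omega

lemma altGaussSum_closed_form (L : ℕ) :
    altGaussSum L 0 (-2) = T L * ∏ k ∈ range L, (1 + T (2 * (k : ℤ) - 1)) ∧
      (1 + T (-1)) * altGaussSum L 1 0
        = (1 - T (2 * L)) * ∏ k ∈ range L, (1 + T (2 * (k : ℤ) - 1)) := by
  induction L with
  | zero => simp [altGaussSum_zero_zero, altGaussSum_zero_one, T_zero]
  | succ L ih =>
    obtain ⟨hB, hD⟩ := ih
    set P := ∏ k ∈ range L, (1 + T (2 * (k : ℤ) - 1) : LaurentPolynomial ℤ)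
    rw [prod_range_succ, altGaussSum_succ_zero, altGaussSum_succ_one, hB]
    push_cast
    constructor
    · apply mul_left_cancel₀ (one_add_T_ne_zero (-1))
      have e : ((1 + T (-1)) * (1 + T (2 * L + 1)) * T L
          + (T (L + 1) - T (L - 1)) * (1 - T (2 * L)) : LaurentPolynomial ℤ)
          = (1 + T (-1)) * T (L + 1) * (1 + T (2 * L - 1)) := by
        simp only [mul_add, add_mul, mul_sub, sub_mul, one_mul, mul_one, ← T_add]
        ring_nf
      linear_combination P * e + (T (L + 1) - T (L - 1)) * hD
    · have e : ((1 + T (2 * L + 1)) * (1 - T (2 * L)) + (1 + T (-1)) * (T L - T (L + 2)) * T L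
          : LaurentPolynomial ℤ) = (1 - T (2 * (L + 1))) * (1 + T (2 * L - 1)) := by
        simp only [mul_add, add_mul, mul_sub, sub_mul, one_mul, mul_one, ← T_add]
        ring_nf
      linear_combination P * e + (1 + T (2 * L + 1)) * hD

def natLaurent : Subsemiring (LaurentPolynomial ℤ) :=
  (AddMonoidAlgebra.mapRingHom ℤ (Nat.castRingHom ℤ)).rangeS

lemma T_mem_natLaurent (n : ℤ) : (T n : LaurentPolynomial ℤ) ∈ natLaurent :=
  ⟨T n, by rw [T, T, AddMonoidAlgebra.mapRingHom_single, map_one]⟩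

lemma coeff_nonneg_of_mem_natLaurent {p : LaurentPolynomial ℤ} (hp : p ∈ natLaurent) (n : ℤ) :
    0 ≤ p.coeff n := by
  obtain ⟨p, rfl⟩ := hp
  simp

theorem stmt5 (L : ℕ) :
    (∑ᶠ j : ℤ, m1 j * T (2 * j ^ 2 - 2 * j) * qbin (T 1) (2 * L) (L - 2 * j)) =
      T L * ∏ k ∈ Finset.range L, (1 + T (2 * (k : ℤ) - 1)) ∧
    ∀ n : ℤ, 0 ≤
      (AddMonoidAlgebra.coeff (∑ᶠ j : ℤ, m1 j * T (2 * j ^ 2 - 2 * j) * qbin (T 1) (2 * L) (L - 2 * j)) : ℤ →₀ ℤ) n := by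
  have hB : (∑ᶠ j : ℤ, m1 j * T (2 * j ^ 2 - 2 * j) * qbin (T 1) (2 * L) (L - 2 * j))
      = altGaussSum L 0 (-2) := by
    simp only [altGaussSum, altGaussTerm, add_zero, neg_mul, ← sub_eq_add_neg]
  rw [hB, (altGaussSum_closed_form L).1]
  refine ⟨rfl, coeff_nonneg_of_mem_natLaurent ?_⟩
  exact mul_mem (T_mem_natLaurent _)
    (prod_mem fun k _ => add_mem (one_mem _) (T_mem_natLaurent _))
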